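/- arXiv:2602.14277 — 6 statements merged into one kernel-verified Lean document; each statement's English description precedes it below -/
import Mathlib

section
/- If v is a terminal node of the reduced game tree T (i.e., v ∈ T but no one-element extension of v lies in T), then v itself is a losing node for some player. -/
/-- The initial segment `[f 0, ..., f (n-1)]` of an infinite sequence. -/
def initSeg (f : ℕ → ℕ) (n : ℕ) : List ℕ := (List.range n).map f

/-- The set of infinite sequences having some initial segment in `S`. -/
def U (S : Set (List ℕ)) : Set (ℕ → ℕ) := { f | ∃ n, initSeg f n ∈ S }

/-- A node `v` is losing for player one if it is player one's turn (even length) and some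
initial segment of `v` lies in `S₂`; losing for player two if it is player two's turn
(odd length) and some initial segment of `v` lies in `S₁`. -/
def LosingNode (S₁ S₂ : Set (List ℕ)) (v : List ℕ) : Prop :=
  (Even v.length ∧ ∃ k ≤ v.length, v.take k ∈ S₂) ∨
    (Odd v.length ∧ ∃ k ≤ v.length, v.take k ∈ S₁)

/-- The reduced game tree: all finite sequences with no proper initial segment that is a
losing node for either player. -/
def ReducedTree (S₁ S₂ : Set (List ℕ)) : Set (List ℕ) :=
  { v | ∀ u : List ℕ, u <+: v → u ≠ v → ¬ LosingNode S₁ S₂ u }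

theorem concat_mem_reducedTree_iff {S₁ S₂ : Set (List ℕ)} {v : List ℕ} (m : ℕ) :
    v ++ [m] ∈ ReducedTree S₁ S₂ ↔ v ∈ ReducedTree S₁ S₂ ∧ ¬ LosingNode S₁ S₂ v := by
  constructor
  · intro h
    have hv : v <+: v ++ [m] := List.prefix_append v [m]
    refine ⟨fun u hu huv ↦ h u (hu.trans hv) ?_, h v hv ?_⟩
    · rintro rfl
      simpa using hu.length_le
    · simp
  · rintro ⟨hv, hlose⟩ u hu hne
    rcases List.prefix_concat_iff.mp hu with rfl | hu
    · exact absurd rfl hne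
    · rcases eq_or_ne u v with rfl | huv
      · exact hlose
      · exact hv u hu huv

theorem terminal_node_losing_general (S₁ S₂ : Set (List ℕ))
    (v : List ℕ) (hv : v ∈ ReducedTree S₁ S₂)
    (hterm : ∀ m : ℕ, v ++ [m] ∉ ReducedTree S₁ S₂) :
    LosingNode S₁ S₂ v := by
  by_contra hlose
  exact hterm 0 ((concat_mem_reducedTree_iff 0).mpr ⟨hv, hlose⟩)

/-- A terminal node of the reduced game tree is itself a losing node for some player. -/
theorem terminal_node_losing (S₁ S₂ : Set (List ℕ)) (hdisj : U S₁ ∩ U S₂ = ∅)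
    (v : List ℕ) (hv : v ∈ ReducedTree S₁ S₂)
    (hterm : ∀ m : ℕ, v ++ [m] ∉ ReducedTree S₁ S₂) :
    LosingNode S₁ S₂ v :=
  terminal_node_losing_general S₁ S₂ v hv hterm
end

section
/- If f : ℕ → ℕ is an infinite branch of the reduced game tree T (every initial segment of f lies in T), then f is a draw in G_{S₁,S₂}, i.e., f ∉ U(S₁) and f ∉ U(S₂). -/
/-!
Along an infinite branch no node is losing, since each node is a proper prefix of the next
one. If some initial segment of `f` lay in `S₁` (resp. `S₂`), then every longer initial
segment of odd (resp. even) length would be a losing node.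
-/

section InitSeg

variable (f : ℕ → ℕ)

@[simp]
theorem length_initSeg (n : ℕ) : (initSeg f n).length = n := by
  simp [initSeg]

theorem initSeg_succ (n : ℕ) : initSeg f (n + 1) = initSeg f n ++ [f n] := by
  simp [initSeg, List.range_succ]

theorem take_initSeg {k n : ℕ} (h : k ≤ n) : (initSeg f n).take k = initSeg f k := by
  simp [initSeg, ← List.map_take, List.take_range, Nat.min_eq_left h]

theorem initSeg_prefix_succ (n : ℕ) : initSeg f n <+: initSeg f (n + 1) :=
  ⟨[f n], (initSeg_succ f n).symm⟩

theorem initSeg_ne_succ (n : ℕ) : initSeg f n ≠ initSeg f (n + 1) :=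
  fun h => by simpa using congrArg List.length h

end InitSeg

section Branch

variable {S₁ S₂ : Set (List ℕ)} {f : ℕ → ℕ}

theorem not_losingNode_initSeg_of_branch (hbranch : ∀ n, initSeg f n ∈ ReducedTree S₁ S₂)
    (n : ℕ) : ¬ LosingNode S₁ S₂ (initSeg f n) :=
  hbranch (n + 1) _ (initSeg_prefix_succ f n) (initSeg_ne_succ f n)

theorem losingNode_initSeg_of_mem_left {n L : ℕ} (hn : initSeg f n ∈ S₁) (hL : Odd L)
    (hnL : n ≤ L) : LosingNode S₁ S₂ (initSeg f L) :=
  Or.inr ⟨by simpa using hL, n, by simpa using hnL, by rwa [take_initSeg f hnL]⟩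

theorem losingNode_initSeg_of_mem_right {n L : ℕ} (hn : initSeg f n ∈ S₂) (hL : Even L)
    (hnL : n ≤ L) : LosingNode S₁ S₂ (initSeg f L) :=
  Or.inl ⟨by simpa using hL, n, by simpa using hnL, by rwa [take_initSeg f hnL]⟩

end Branch

theorem infinite_branch_draw_general (S₁ S₂ : Set (List ℕ))
    (f : ℕ → ℕ) (hbranch : ∀ n : ℕ, initSeg f n ∈ ReducedTree S₁ S₂) :
    f ∉ U S₁ ∧ f ∉ U S₂ := by
  constructor
  · rintro ⟨n, hn⟩
    exact not_losingNode_initSeg_of_branch hbranch (2 * n + 1)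
      (losingNode_initSeg_of_mem_left hn (odd_two_mul_add_one n) (by omega))
  · rintro ⟨n, hn⟩
    exact not_losingNode_initSeg_of_branch hbranch (2 * n)
      (losingNode_initSeg_of_mem_right hn (even_two_mul n) (by omega))

/-- An infinite branch of the reduced game tree is a draw of the game. -/
theorem infinite_branch_draw (S₁ S₂ : Set (List ℕ)) (hdisj : U S₁ ∩ U S₂ = ∅)
    (f : ℕ → ℕ) (hbranch : ∀ n : ℕ, initSeg f n ∈ ReducedTree S₁ S₂) :
    f ∉ U S₁ ∧ f ∉ U S₂ :=
  infinite_branch_draw_general S₁ S₂ f hbranch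
end

section
/- For every countable infinite ordinal α there exists an infinite set Z ⊆ {0,1}^{<ω} such that the choosing-nodes-from-Z game has game value at least α for White (Black loses, and the ordinal rank of the game tree is ≥ α). -/
/-! Let `Z` consist of the unary codes, via an injection `Iio α ↪ ℕ`, of the strictly
decreasing sequences of ordinals below `α`; the coding turns the prefix order of sequences into
that of nodes. A position Black has not yet lost is a set of prefixes of one decreasing
sequence `m`, and Black can always extend `m` by any ordinal below its last entry (below `α` if
`m = []`), so the value of the position is at least that entry. The game terminates since each
move either lowers the last entry of `m` or names one more of its finitely many prefixes. -/

/-- Two nodes of the binary tree are incomparable if neither is a prefix of the other. -/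
def Incomp (u v : List Bool) : Prop := ¬(u <+: v ∨ v <+: u)

/-- Black has lost once the list of named nodes contains an incomparable pair. -/
def Lost (p : List (List Bool)) : Prop := ∃ u ∈ p, ∃ v ∈ p, Incomp u v

/-- Ordinal game values for White in the choosing-nodes-from-`Z` game. A position (the
finite list of nodes named so far) has value `0` once Black has named an incomparable
pair; otherwise, with Black to move, its value is the supremum over Black's legal moves
(previously unnamed elements of `Z`) of the values of the resulting positions plus one. -/
inductive CGValue (Z : Set (List Bool)) : List (List Bool) → Ordinal → Prop
  | lost (p : List (List Bool)) (h : Lost p) : CGValue Z p 0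
  | step (p : List (List Bool)) (h : ¬ Lost p) (g : List Bool → Ordinal)
      (hg : ∀ z ∈ Z, z ∉ p → CGValue Z (p ++ [z]) (g z)) :
      CGValue Z p (⨆ z : {z : List Bool // z ∈ Z ∧ z ∉ p}, (g z.1 + 1))

open List Ordinal Set

namespace CGValue

variable {Z : Set (List Bool)} {p : List (List Bool)}

theorem unique {β β' : Ordinal} (h : CGValue Z p β) (h' : CGValue Z p β') : β = β' := by
  induction h generalizing β' with
  | lost p hp =>
    cases h' with
    | lost => rfl
    | step _ hp' => exact absurd hp hp'
  | step p hp g hg ih =>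
    cases h' with
    | lost _ hp' => exact absurd hp' hp
    | step _ _ g' hg' =>
      exact iSup_congr fun z => by rw [ih z.1 z.2.1 z.2.2 (hg' z.1 z.2.1 z.2.2)]

theorem exists_of_forall_move (hp : ¬ Lost p)
    (h : ∀ z ∈ Z, z ∉ p → ∃ β : Ordinal.{u}, CGValue Z (p ++ [z]) β) :
    ∃ β : Ordinal.{u}, CGValue Z p β := by
  choose! g hg using h
  exact ⟨_, step p hp g hg⟩

theorem lt_of_move {z : List Bool} {β βz : Ordinal} (h : CGValue Z p β) (hp : ¬ Lost p)
    (hz : z ∈ Z) (hzp : z ∉ p) (hβz : CGValue Z (p ++ [z]) βz) : βz < β := by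
  cases h with
  | lost _ hp' => exact absurd hp' hp
  | step _ _ g hg =>
    rw [hβz.unique (hg z hz hzp)]
    exact (lt_add_one _).trans_le
      (Ordinal.le_iSup (fun z : {z // z ∈ Z ∧ z ∉ p} => g z.1 + 1) ⟨z, hz, hzp⟩)

end CGValue

def unaryCode : List ℕ → List Bool
  | [] => []
  | n :: s => replicate n false ++ true :: unaryCode s

theorem replicate_false_append_true_prefix_iff {n k : ℕ} {u v : List Bool} :
    replicate n false ++ true :: u <+: replicate k false ++ true :: v ↔ n = k ∧ u <+: v := by
  induction n generalizing k with
  | zero => cases k <;> simp [replicate_succ]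
  | succ n ih => cases k <;> simp [replicate_succ, ih]

theorem unaryCode_prefix_iff {s t : List ℕ} : unaryCode s <+: unaryCode t ↔ s <+: t := by
  induction s generalizing t with
  | nil => simp [unaryCode]
  | cons n s ih =>
    cases t with
    | nil => simp [unaryCode]
    | cons k t => simp [unaryCode, replicate_false_append_true_prefix_iff, ih]

theorem List.Nodup.length_le_of_forall_prefix {α : Type*} {q : List (List α)} {m : List α}
    (hq : q.Nodup) (h : ∀ σ ∈ q, σ <+: m) : q.length ≤ m.length + 1 := by
  simpa using (hq.subperm fun σ hσ => (mem_inits σ m).2 (h σ hσ)).length_le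

namespace ChoosingGame

variable {α : Ordinal.{u}}

/-- The last entry of a decreasing sequence, and `α` for the empty one. -/
noncomputable def bound (m : List (Iio α)) : Ordinal.{u} := m.foldr (fun a b => min a.1 b) α

theorem lt_bound_iff {δ : Ordinal} {m : List (Iio α)} :
    δ < bound m ↔ δ < α ∧ ∀ a ∈ m, δ < a.1 := by
  induction m with
  | nil => simp [bound]
  | cons a m ih =>
    change δ < min a.1 (bound m) ↔ _
    rw [lt_min_iff, ih, forall_mem_cons]
    tauto

theorem bound_le_of_mem {a : Iio α} {m : List (Iio α)} (ha : a ∈ m) : bound m ≤ a :=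
  not_lt.1 fun h => (lt_bound_iff.1 h).2 a ha |>.false

theorem bound_lt_of_prefix {m σ : List (Iio α)} (hσ : σ.Pairwise (· > ·)) (hmσ : m <+: σ)
    (hne : m ≠ σ) : bound σ < bound m := by
  obtain ⟨_ | ⟨x, rest⟩, rfl⟩ := hmσ
  · simp at hne
  · refine (bound_le_of_mem (by simp)).trans_lt (lt_bound_iff.2 ⟨x.2, fun a ha => ?_⟩)
    exact (pairwise_append.1 hσ).2.2 a ha x (by simp)

theorem pairwise_append_singleton_of_lt_bound {m : List (Iio α)} {x : Iio α}
    (hm : m.Pairwise (· > ·)) (hx : x.1 < bound m) : (m ++ [x]).Pairwise (· > ·) :=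
  pairwise_append.2 ⟨hm, pairwise_singleton _ _, fun a ha b hb => by
    rw [mem_singleton.1 hb]; exact (lt_bound_iff.1 hx).2 a ha⟩

theorem bound_append_singleton {m : List (Iio α)} {x : Iio α} (hx : x.1 < bound m) :
    bound (m ++ [x]) = x :=
  (bound_le_of_mem (by simp)).antisymm <| le_of_forall_lt fun δ hδ =>
    lt_bound_iff.2 ⟨hδ.trans x.2, fun a ha => (mem_append.1 ha).elim
      (fun ha => hδ.trans ((lt_bound_iff.1 hx).2 a ha)) fun ha => mem_singleton.1 ha ▸ hδ⟩

structure IsPosition (m : List (Iio α)) (q : List (List (Iio α))) : Prop where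
  decreasing : m.Pairwise (· > ·)
  nodup : q.Nodup
  prefix_of_mem : ∀ σ ∈ q, σ <+: m
  /-- `m = []` allows the initial position, where nothing is named yet. -/
  named : m = [] ∨ m ∈ q

noncomputable def potential (m : List (Iio α)) (q : List (List (Iio α))) : Ordinal ×ₗ ℕ :=
  toLex (bound m, m.length + 1 - q.length)

namespace IsPosition

variable {m σ : List (Iio α)} {q : List (List (Iio α))}

theorem nil : IsPosition ([] : List (Iio α)) [] :=
  ⟨.nil, nodup_nil, by simp, .inl rfl⟩

theorem append_of_prefix (h : IsPosition m q) (hσm : σ <+: m) (hσq : σ ∉ q) :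
    IsPosition m (q ++ [σ]) ∧ potential m (q ++ [σ]) < potential m q := by
  have hprefix : ∀ τ ∈ q ++ [σ], τ <+: m :=
    forall_mem_append.2 ⟨h.prefix_of_mem, forall_mem_singleton.2 hσm⟩
  have hnodup : (q ++ [σ]).Nodup := h.nodup.append (nodup_singleton σ) (by simpa using hσq)
  refine ⟨⟨h.decreasing, hnodup, hprefix, h.named.imp_right (mem_append_left _)⟩, ?_⟩
  have hlen := hnodup.length_le_of_forall_prefix hprefix
  simp only [potential, length_append, length_singleton] at hlen ⊢
  exact Prod.Lex.toLex_lt_toLex.2 (.inr ⟨rfl, by omega⟩)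

theorem append_of_extends (h : IsPosition m q) (hσ : σ.Pairwise (· > ·)) (hmσ : m <+: σ)
    (hne : m ≠ σ) (hσq : σ ∉ q) :
    IsPosition σ (q ++ [σ]) ∧ potential σ (q ++ [σ]) < potential m q :=
  ⟨⟨hσ, h.nodup.append (nodup_singleton σ) (by simpa using hσq),
    forall_mem_append.2 ⟨fun τ hτ => (h.prefix_of_mem τ hτ).trans hmσ, by simp⟩,
    by simp⟩,
    Prod.Lex.toLex_lt_toLex.2 (.inl (bound_lt_of_prefix hσ hmσ hne))⟩

end IsPosition

variable (e : Iio α ↪ ℕ)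

def nodeCode (s : List (Iio α)) : List Bool := unaryCode (s.map e)

def decreasingNodes : Set (List Bool) := nodeCode e '' {s | s.Pairwise (· > ·)}

theorem nodeCode_prefix_iff {s t : List (Iio α)} :
    nodeCode e s <+: nodeCode e t ↔ s <+: t := by
  rw [nodeCode, nodeCode, unaryCode_prefix_iff, prefix_map_iff_of_injective e.injective]

theorem nodeCode_injective : Function.Injective (nodeCode e) := fun s t h => by
  have hst : s <+: t := (nodeCode_prefix_iff e).1 (by rw [h])
  have hts : t <+: s := (nodeCode_prefix_iff e).1 (by rw [h])
  exact hst.eq_of_length (hst.length_le.antisymm hts.length_le)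

theorem decreasingNodes_infinite (hα : (Iio α).Infinite) : (decreasingNodes e).Infinite :=
  have := hα.to_subtype
  infinite_of_injective_forall_mem (f := fun x : Iio α => nodeCode e [x])
    (fun x y h => by simpa using nodeCode_injective e h) fun x => ⟨[x], by simp, rfl⟩

theorem lost_map_nodeCode_iff {q : List (List (Iio α))} :
    Lost (q.map (nodeCode e)) ↔ ∃ σ ∈ q, ∃ τ ∈ q, ¬(σ <+: τ ∨ τ <+: σ) := by
  simp [Lost, Incomp, nodeCode_prefix_iff]

theorem not_lost_map_nodeCode {q : List (List (Iio α))} {m : List (Iio α)}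
    (h : ∀ σ ∈ q, σ <+: m) : ¬ Lost (q.map (nodeCode e)) := by
  rw [lost_map_nodeCode_iff]
  rintro ⟨σ, hσ, τ, hτ, hστ⟩
  exact hστ (prefix_or_prefix_of_prefix (h σ hσ) (h τ hτ))

theorem IsPosition.lost_map_nodeCode_append {m σ : List (Iio α)} {q : List (List (Iio α))}
    (h : IsPosition m q) (hσm : ¬σ <+: m) (hmσ : ¬m <+: σ) :
    Lost ((q ++ [σ]).map (nodeCode e)) := by
  have hm : m ∈ q := h.named.resolve_left (by rintro rfl; exact hmσ nil_prefix)
  exact (lost_map_nodeCode_iff e).2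
    ⟨m, mem_append_left _ hm, σ, mem_append_right _ (mem_singleton_self σ), by tauto⟩

theorem IsPosition.exists_value_ge_bound {m : List (Iio α)} {q : List (List (Iio α))}
    (h : IsPosition m q) :
    ∃ β, bound m ≤ β ∧ CGValue (decreasingNodes e) (q.map (nodeCode e)) β := by
  have hp := not_lost_map_nodeCode e h.prefix_of_mem
  have hmoves : ∀ z ∈ decreasingNodes e, z ∉ q.map (nodeCode e) →
      ∃ β, CGValue (decreasingNodes e) (q.map (nodeCode e) ++ [z]) β := by
    rintro _ ⟨σ, hσ, rfl⟩ hσq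
    rw [mem_map_of_injective (nodeCode_injective e)] at hσq
    rw [← map_singleton, ← map_append]
    by_cases hσm : σ <+: m
    · obtain ⟨hpos, hlt⟩ := h.append_of_prefix hσm hσq
      obtain ⟨β, -, hβ⟩ := hpos.exists_value_ge_bound
      exact ⟨β, hβ⟩
    by_cases hmσ : m <+: σ
    · obtain ⟨hpos, hlt⟩ :=
        h.append_of_extends hσ hmσ (fun hmσ' => hσm (hmσ' ▸ prefix_refl m)) hσq
      obtain ⟨β, -, hβ⟩ := hpos.exists_value_ge_bound
      exact ⟨β, hβ⟩
    exact ⟨0, .lost _ (h.lost_map_nodeCode_append e hσm hmσ)⟩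
  obtain ⟨β, hβ⟩ := CGValue.exists_of_forall_move hp hmoves
  refine ⟨β, le_of_forall_lt fun δ hδ => ?_, hβ⟩
  set x : Iio α := ⟨δ, (lt_bound_iff.1 hδ).1⟩
  have hmx : (m ++ [x]).Pairwise (· > ·) := pairwise_append_singleton_of_lt_bound h.decreasing hδ
  have hxq : m ++ [x] ∉ q := fun hxq => by simpa using (h.prefix_of_mem _ hxq).length_le
  obtain ⟨hpos, hlt⟩ := h.append_of_extends hmx (prefix_append m [x]) (by simp) hxq
  obtain ⟨βx, hδβx, hβx⟩ := hpos.exists_value_ge_bound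
  rw [map_append, map_singleton] at hβx
  calc δ = bound (m ++ [x]) := (bound_append_singleton (x := x) hδ).symm
    _ ≤ βx := hδβx
    _ < β := hβ.lt_of_move hp ⟨_, hmx, rfl⟩
      (by rwa [mem_map_of_injective (nodeCode_injective e)]) hβx
termination_by potential m q
decreasing_by all_goals exact hlt

end ChoosingGame

open ChoosingGame in
/-- For every countable infinite ordinal `α` there is an infinite set `Z` of binary
nodes whose choosing-nodes-from-`Z` game has game value at least `α` for White. -/
theorem exists_choosing_game_value_ge (α : Ordinal)
    (hα : Ordinal.omega0 ≤ α) (hcount : α < (Cardinal.aleph 1).ord) :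
    ∃ Z : Set (List Bool), Z.Infinite ∧ ∃ β : Ordinal, α ≤ β ∧ CGValue Z [] β := by
  have hcountable : (Iio α).Countable := by
    rw [← Cardinal.le_aleph0_iff_set_countable, Cardinal.mk_Iio_ordinal, Cardinal.lift_le_aleph0,
      ← Cardinal.lt_aleph_one_iff]
    exact Cardinal.lt_ord.1 hcount
  have hinfinite : (Iio α).Infinite :=
    infinite_of_injective_forall_mem Nat.cast_injective
      fun n => (natCast_lt_omega0 n).trans_le hα
  have := hcountable.to_subtype
  obtain ⟨e, he⟩ := Countable.exists_injective_nat (Iio α)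
  exact ⟨_, decreasingNodes_infinite ⟨e, he⟩ hinfinite,
    IsPosition.nil.exists_value_ge_bound ⟨e, he⟩⟩
end

section
/- Prepending a Z-node at the root increases the game value: if Z ⊆ {0,1}^{<ω} yields a choosing-nodes-from-Z game in which Black loses with game value α, then the set Z' = {ε} ∪ {0⌢v : v ∈ Z} (the root node together with Z shifted below the left child) yields a game in which Black loses with game value at least α + 1. -/
lemma incomp_cons {b : Bool} {u v : List Bool} :
    Incomp (b :: u) (b :: v) ↔ Incomp u v := by
  simp [Incomp, List.cons_prefix_cons]

lemma not_incomp_nil_left (v : List Bool) : ¬ Incomp [] v := by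
  simp [Incomp]

lemma not_incomp_nil_right (v : List Bool) : ¬ Incomp v [] := by
  simp [Incomp]

lemma lost_congr {p q : List (List Bool)} (h : ∀ x, x ∈ p ↔ x ∈ q) :
    Lost p ↔ Lost q := by
  unfold Lost
  constructor
  · rintro ⟨u, hu, v, hv, huv⟩
    exact ⟨u, (h u).mp hu, v, (h v).mp hv, huv⟩
  · rintro ⟨u, hu, v, hv, huv⟩
    exact ⟨u, (h u).mpr hu, v, (h v).mpr hv, huv⟩

lemma iSup_pred_congr {P Q : List Bool → Prop} (h : P = Q) (f : List Bool → Ordinal) :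
    (⨆ z : {z // P z}, f z.1) = ⨆ z : {z // Q z}, f z.1 := by subst h; rfl

/-- `CGValue` only depends on positions up to membership. -/
lemma cg_memcongr {Z : Set (List Bool)} {p : List (List Bool)} {α : Ordinal}
    (h : CGValue Z p α) :
    ∀ q, (∀ x, x ∈ p ↔ x ∈ q) → CGValue Z q α := by
  induction h with
  | lost p hl =>
    intro q hq
    exact .lost q ((lost_congr hq).mp hl)
  | step p hl g hg ih =>
    intro q hq
    have hPQ : (fun z : List Bool => z ∈ Z ∧ z ∉ p) = fun z => z ∈ Z ∧ z ∉ q := by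
      funext z; exact propext (by simp [hq z])
    rw [iSup_pred_congr hPQ (fun z => g z + 1)]
    refine .step q (fun hLq => hl ((lost_congr hq).mpr hLq)) g ?_
    intro z hz hzq
    refine ih z hz (fun hzp => hzq ((hq z).mp hzp)) (q ++ [z]) ?_
    intro x; simp [hq x]

section Shift

variable (Z : Set (List Bool))

local notation "Z'" => ({([] : List Bool)} ∪ (List.cons false) '' Z)

lemma nil_not_mem_shift (p : List (List Bool)) :
    ([] : List Bool) ∉ p.map (List.cons false) := by
  simp

lemma mem_shift {w : List Bool} {p : List (List Bool)} :
    (false :: w) ∈ p.map (List.cons false) ↔ w ∈ p := by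
  simp

lemma lost_shift {p : List (List Bool)} :
    Lost ([] :: p.map (List.cons false)) ↔ Lost p := by
  constructor
  · rintro ⟨u, hu, v, hv, huv⟩
    rcases List.mem_cons.mp hu with rfl | hu
    · exact absurd huv (not_incomp_nil_left v)
    rcases List.mem_cons.mp hv with rfl | hv
    · exact absurd huv (not_incomp_nil_right u)
    rcases List.mem_map.mp hu with ⟨u', hu', rfl⟩
    rcases List.mem_map.mp hv with ⟨v', hv', rfl⟩
    exact ⟨u', hu', v', hv', incomp_cons.mp huv⟩
  · rintro ⟨u, hu, v, hv, huv⟩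
    exact ⟨false :: u, by simp [hu], false :: v, by simp [hv], incomp_cons.mpr huv⟩

lemma lost_shift' {p : List (List Bool)} :
    Lost (p.map (List.cons false)) ↔ Lost p := by
  constructor
  · rintro ⟨u, hu, v, hv, huv⟩
    rcases List.mem_map.mp hu with ⟨u', hu', rfl⟩
    rcases List.mem_map.mp hv with ⟨v', hv', rfl⟩
    exact ⟨u', hu', v', hv', incomp_cons.mp huv⟩
  · rintro ⟨u, hu, v, hv, huv⟩
    exact ⟨false :: u, by simp [hu], false :: v, by simp [hv], incomp_cons.mpr huv⟩

/-- Shift lemma: the value of the `Z` game at `p` equals the value of the `Z'` game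
at the position `[] :: shift p`. -/
lemma shiftA {p : List (List Bool)} {α : Ordinal} (h : CGValue Z p α) :
    CGValue Z' ([] :: p.map (List.cons false)) α := by
  induction h with
  | lost p hl =>
    exact .lost _ ((lost_shift).mpr hl)
  | step p hl g hg ih =>
    set pos := ([] :: p.map (List.cons false)) with hpos
    have hnl : ¬ Lost pos := fun hL => hl ((lost_shift).mp hL)
    have key := CGValue.step (Z := Z') pos hnl (fun z => g z.tail) ?_
    · have heq : (⨆ z : {z // z ∈ Z' ∧ z ∉ pos}, ((fun z : List Bool => g z.tail) z.1 + 1))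
          = ⨆ z : {z : List Bool // z ∈ Z ∧ z ∉ p}, (g z.1 + 1) := by
        apply le_antisymm
        · apply Ordinal.iSup_le
          rintro ⟨z, hz, hzpos⟩
          rcases hz with hz | ⟨w, hw, rfl⟩
          · exact absurd (Set.mem_singleton_iff.mp hz) (by rintro rfl; exact hzpos (by simp [hpos]))
          · have hwp : w ∉ p := fun hwp => hzpos (by simp [hpos, hwp])
            exact Ordinal.le_iSup (fun z : {z : List Bool // z ∈ Z ∧ z ∉ p} => g z.1 + 1)
              ⟨w, hw, hwp⟩
        · apply Ordinal.iSup_le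
          rintro ⟨w, hw, hwp⟩
          have hmem : (false :: w) ∈ Z' := Or.inr ⟨w, hw, rfl⟩
          have hnm : (false :: w) ∉ pos := by
            simp only [hpos, List.mem_cons]
            rintro (h | h)
            · simp at h
            · exact hwp ((mem_shift).mp h)
          exact Ordinal.le_iSup (fun z : {z // z ∈ Z' ∧ z ∉ pos} => g z.1.tail + 1)
            ⟨false :: w, hmem, hnm⟩
      rwa [heq] at key
    · rintro z (hz | ⟨w, hw, rfl⟩) hznm
      · exact absurd (Set.mem_singleton_iff.mp hz) (by rintro rfl; exact hznm (by simp [hpos]))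
      · have hwp : w ∉ p := fun hwp => hznm (by simp [hpos, hwp])
        have := ih w hw hwp
        simpa [hpos] using this

/-- Main lemma, generalized over positions. -/
lemma shiftB {p : List (List Bool)} {α : Ordinal} (h : CGValue Z p α) :
    ∃ β : Ordinal, CGValue Z' (p.map (List.cons false)) β ∧ (¬ Lost p → α + 1 ≤ β) := by
  induction h with
  | lost p hl =>
    exact ⟨0, .lost _ ((lost_shift').mpr hl), fun h => absurd hl h⟩
  | step p hl g hg ih =>
    classical
    set pos := p.map (List.cons false) with hpos
    have hnl : ¬ Lost pos := fun hL => hl ((lost_shift').mp hL)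
    set α := ⨆ z : {z : List Bool // z ∈ Z ∧ z ∉ p}, (g z.1 + 1) with hα
    set G : List Bool → Ordinal := fun z =>
      if z = [] then α
      else if hz : ∃ β, CGValue Z' (pos ++ [z]) β then hz.choose else 0 with hG
    have hgG : ∀ z ∈ Z', z ∉ pos → CGValue Z' (pos ++ [z]) (G z) := by
      rintro z (hz | ⟨w, hw, rfl⟩) hznm
      · rcases Set.mem_singleton_iff.mp hz with rfl
        have hA := shiftA Z (.step p hl g hg)
        have : G [] = α := by simp [hG]
        rw [this]
        exact cg_memcongr hA (pos ++ [[]]) (by intro x; simp [hpos, or_comm])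
      · have hwp : w ∉ p := fun hwp => hznm (by simp [hpos, hwp])
        obtain ⟨β, hβ, -⟩ := ih w hw hwp
        have hex : ∃ β, CGValue Z' (pos ++ [false :: w]) β := ⟨β, by simpa [hpos] using hβ⟩
        have hGz : G (false :: w) = hex.choose := by
          simp only [hG, if_neg (List.cons_ne_nil false w), dif_pos hex]
        rw [hGz]
        exact hex.choose_spec
    refine ⟨_, CGValue.step pos hnl G hgG, fun _ => ?_⟩
    have hnm : ([] : List Bool) ∉ pos := nil_not_mem_shift p
    have hmem : ([] : List Bool) ∈ Z' := Or.inl rfl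
    have := Ordinal.le_iSup (fun z : {z // z ∈ Z' ∧ z ∉ pos} => G z.1 + 1) ⟨[], hmem, hnm⟩
    simpa [hG] using this

end Shift

/-- Prepending a `Z`-node at the root increases the game value: adding the empty node and
shifting `Z` below the left child yields a losing game for Black of value at least `α+1`. -/
theorem root_node_succ (Z : Set (List Bool)) (α : Ordinal) (h : CGValue Z [] α) :
    ∃ β : Ordinal, α + 1 ≤ β ∧
      CGValue ({([] : List Bool)} ∪ (List.cons false) '' Z) [] β := by
  have hnl : ¬ Lost ([] : List (List Bool)) := by simp [Lost]
  obtain ⟨β, hβ, hle⟩ := shiftB Z h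
  exact ⟨β, hle hnl, by simpa using hβ⟩
end

section
/- Grafting countably many losing choosing-nodes games onto pairwise incomparable positions of the binary tree yields a losing game of value at least the supremum: if for each i ∈ ℕ, Zᵢ ⊆ {0,1}^{<ω} gives a choosing-nodes game of value αᵢ in which Black loses, and (wᵢ) are pairwise prefix-incomparable nodes, then Z = ⋃ᵢ {wᵢ⌢v : v ∈ Zᵢ} gives a game in which Black loses with value at least sup_i αᵢ. -/
/-! Once Black has named a node below `w i`, any node below another `w j` loses at once, so from
then on the grafted game is the `Z i`-game translated by `w i`, and its positions have at least
the values of the corresponding `Z i`-positions. Black's first move chooses the branch, so the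
value of the grafted game is at least every `a i`; values are unique, hence it bounds the sup. -/

lemma Incomp.append {x y : List Bool} (h : Incomp x y) (u v : List Bool) :
    Incomp (x ++ u) (y ++ v) := by
  rintro (hxy | hyx)
  · exact h (List.prefix_or_prefix_of_prefix ((List.prefix_append x u).trans hxy)
      (List.prefix_append y v))
  · exact h (List.prefix_or_prefix_of_prefix (List.prefix_append x u)
      ((List.prefix_append y v).trans hyx))

lemma incomp_append_left_iff {x u v : List Bool} : Incomp (x ++ u) (x ++ v) ↔ Incomp u v := by
  simp only [Incomp, List.prefix_append_right_inj]

lemma lost_map_append_left_iff {x : List Bool} {p : List (List Bool)} :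
    Lost (p.map (x ++ ·)) ↔ Lost p := by
  simp only [Lost, List.mem_map, exists_exists_and_eq_and, incomp_append_left_iff]

universe u

namespace CGValue

variable {Z Z' : Set (List Bool)} {p p' : List (List Bool)} {α β : Ordinal.{u}}

theorem unique_s17 (hα : CGValue Z p α) (hβ : CGValue Z p β) : α = β := by
  induction hα generalizing β with
  | lost p hL =>
    cases hβ with
    | lost => rfl
    | step _ hL' => exact absurd hL hL'
  | step p hL g hg ih =>
    cases hβ with
    | lost _ hL' => exact absurd hL' hL
    | step _ _ g' hg' =>
      exact iSup_congr fun z => by rw [ih z.1 z.2.1 z.2.2 (hg' z.1 z.2.1 z.2.2)]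

theorem exists_move (hα : CGValue Z p α) (hp : ¬ Lost p) {z : List Bool} (hz : z ∈ Z)
    (hzp : z ∉ p) : ∃ γ : Ordinal.{u}, CGValue Z (p ++ [z]) γ := by
  cases hα with
  | lost _ hL => exact absurd hL hp
  | step _ _ g hg => exact ⟨g z, hg z hz hzp⟩

theorem exists_ge (hα : CGValue Z p α) (hp' : ¬ Lost p')
    (hZ' : ∀ z' ∈ Z', z' ∉ p' → ∃ γ' : Ordinal.{u}, CGValue Z' (p' ++ [z']) γ')
    (hsim : ∀ z ∈ Z, z ∉ p → ∀ γ : Ordinal.{u}, CGValue Z (p ++ [z]) γ →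
      ∃ z' ∈ Z', z' ∉ p' ∧ ∃ γ', γ ≤ γ' ∧ CGValue Z' (p' ++ [z']) γ') :
    ∃ β, α ≤ β ∧ CGValue Z' p' β := by
  choose! g' hg' using hZ'
  refine ⟨_, ?_, step p' hp' g' hg'⟩
  cases hα with
  | lost => exact zero_le
  | step _ _ g hg =>
    refine Ordinal.iSup_le fun ⟨z, hz, hzp⟩ => ?_
    obtain ⟨z', hz', hz'p, γ', hle, hγ'⟩ := hsim z hz hzp _ (hg z hz hzp)
    calc g z + 1 ≤ g' z' + 1 := by gcongr; exact hle.trans (hγ'.unique_s17 (hg' z' hz' hz'p)).le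
      _ ≤ _ := Ordinal.le_iSup (fun z : {z : List Bool // z ∈ Z' ∧ z ∉ p'} => g' z.1 + 1)
        (⟨z', hz', hz'p⟩ : {z : List Bool // z ∈ Z' ∧ z ∉ p'})

end CGValue

def graft {ι : Type*} (Z : ι → Set (List Bool)) (w : ι → List Bool) : Set (List Bool) :=
  ⋃ i, (fun v => w i ++ v) '' Z i

section Graft

variable {ι : Type*} {Z : ι → Set (List Bool)} {w : ι → List Bool}

lemma mem_graft {z : List Bool} : z ∈ graft Z w ↔ ∃ i, ∃ v ∈ Z i, w i ++ v = z := by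
  simp [graft]

lemma append_mem_graft {i : ι} {v : List Bool} (hv : v ∈ Z i) : w i ++ v ∈ graft Z w :=
  mem_graft.2 ⟨i, v, hv, rfl⟩

variable (hw : Pairwise fun i j => Incomp (w i) (w j))
include hw

theorem CGValue.exists_ge_graft {i : ι} {q : List (List Bool)} {α : Ordinal.{u}}
    (hq : CGValue (Z i) q α) (hq_ne : q ≠ []) :
    ∃ β : Ordinal.{u}, α ≤ β ∧ CGValue (graft Z w) (q.map (w i ++ ·)) β := by
  induction hq with
  | lost p hL => exact ⟨0, le_rfl, .lost _ (lost_map_append_left_iff.2 hL)⟩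
  | step p hL g hg ih =>
    obtain ⟨u, hu⟩ := List.exists_mem_of_ne_nil p hq_ne
    have ih' : ∀ v ∈ Z i, v ∉ p →
        ∃ β, g v ≤ β ∧ CGValue (graft Z w) (p.map (w i ++ ·) ++ [w i ++ v]) β := by
      intro v hv hvp
      simpa using ih v hv hvp (by simp)
    refine (CGValue.step p hL g hg).exists_ge (mt lost_map_append_left_iff.1 hL) ?_ ?_
    · rintro _ hz hzp
      obtain ⟨j, v, hv, rfl⟩ := mem_graft.1 hz
      rcases eq_or_ne j i with rfl | hji
      · obtain ⟨β, -, hβ⟩ := ih' v hv (by simpa using hzp)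
        exact ⟨β, hβ⟩
      · exact ⟨0, .lost _ ⟨w i ++ u, List.mem_append_left _ (List.mem_map_of_mem hu),
          w j ++ v, by simp, (hw hji.symm).append u v⟩⟩
    · intro v hv hvp γ hγ
      obtain ⟨β, hgβ, hβ⟩ := ih' v hv hvp
      exact ⟨w i ++ v, append_mem_graft hv, by simpa using hvp, β,
        ((hg v hv hvp).unique_s17 hγ ▸ hgβ), hβ⟩

theorem CGValue.exists_ge_graft_nil {i : ι} {α : Ordinal.{u}} (hα : CGValue (Z i) [] α)
    (hZ : ∀ j, ∃ α : Ordinal.{u}, CGValue (Z j) [] α) :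
    ∃ β : Ordinal.{u}, α ≤ β ∧ CGValue (graft Z w) [] β := by
  have hnil : ¬ Lost ([] : List (List Bool)) := by simp [Lost]
  refine hα.exists_ge hnil ?_ ?_
  · rintro _ hz -
    obtain ⟨j, v, hv, rfl⟩ := mem_graft.1 hz
    obtain ⟨αj, hαj⟩ := hZ j
    obtain ⟨γ, hγ⟩ := hαj.exists_move hnil hv List.not_mem_nil
    obtain ⟨β, -, hβ⟩ := hγ.exists_ge_graft hw (by simp)
    exact ⟨β, by simpa using hβ⟩
  · rintro v hv - γ hγ
    obtain ⟨β, hγβ, hβ⟩ := hγ.exists_ge_graft hw (by simp)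
    exact ⟨w i ++ v, append_mem_graft hv, List.not_mem_nil, β, hγβ, by simpa using hβ⟩

end Graft

/-- Grafting countably many losing choosing-nodes games onto pairwise incomparable nodes
gives a losing game of value at least the supremum of the values. -/
theorem graft_sup (Z : ℕ → Set (List Bool)) (a : ℕ → Ordinal)
    (h : ∀ i : ℕ, CGValue (Z i) [] (a i))
    (w : ℕ → List Bool) (hw : ∀ i j : ℕ, i ≠ j → Incomp (w i) (w j)) :
    ∃ β : Ordinal, (⨆ i : ℕ, a i) ≤ β ∧
      CGValue (⋃ i : ℕ, (fun v => w i ++ v) '' Z i) [] β := by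
  choose β hβ using fun i => (h i).exists_ge_graft_nil (w := w) hw fun j => ⟨a j, h j⟩
  refine ⟨β 0, Ordinal.iSup_le fun i => ?_, (hβ 0).2⟩
  exact (hβ i).1.trans ((hβ i).2.unique_s17 (hβ 0).2).le
end

section
/- In a game where one player may pass and positions are determined up to equivalence by their restriction to finite sets (a compactness/locality hypothesis), only finite game values arise: if every position q of finite game value k has a finite set S(q) of coordinates such that any position agreeing with q on S(q) has value at most k, and the passing player can always pass, then no position has game value ω. -/
/-!
Passing gives Black a position of finite value `k`. By locality, every Black move that leaves
the finite set `S` of coordinates untouched has value `≤ k`, and only finitely many moves touch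
`S`. So the values of Black's options are bounded by a finite ordinal, and their supremum cannot
be `ω`.
-/

theorem exists_bound_lt_of_finite_not_le {α : Type*} [LinearOrder α] {A : Set α} {k b : α}
    (hA : ∀ a ∈ A, a < b) (hk : k < b) (hfin : {a ∈ A | ¬a ≤ k}.Finite) :
    ∃ M < b, k ≤ M ∧ ∀ a ∈ A, a ≤ M := by
  obtain ⟨M, hM, hle⟩ := Set.exists_max_image (insert k {a ∈ A | ¬a ≤ k}) id
    (hfin.insert k) (Set.insert_nonempty _ _)
  refine ⟨M, ?_, hle k (Set.mem_insert _ _), fun a ha => ?_⟩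
  · rcases hM with rfl | ⟨hMA, -⟩
    exacts [hk, hA M hMA]
  · by_cases hak : a ≤ k
    · exact hak.trans (hle k (Set.mem_insert _ _))
    · exact hle a (Set.mem_insert_of_mem _ ⟨ha, hak⟩)

theorem Set.Finite.setOf_exists_mem_of_subsingleton {α β : Type*} {r : α → β → Prop}
    (hr : ∀ a, {b | r a b}.Subsingleton) {s : Set α} (hs : s.Finite) :
    {b | ∃ a ∈ s, r a b}.Finite := by
  have hunion : {b | ∃ a ∈ s, r a b} = ⋃ a ∈ s, {b | r a b} := by ext; simp
  exact hunion ▸ hs.biUnion fun a _ => (hr a).finite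

/-- `wval q k` (resp. `bval q α`): the position `q` with White (resp. Black) to move has game
value `k` (resp. `α`). `move q` holds Black's non-pass moves from `q`; a pass leaves `q` with White
to move. `hbval` encodes that `α` is the supremum of the values of the pass and of the moves. -/
theorem no_black_position_of_value_omega {ι X : Type*}
    (wval bval : (ι → X) → Ordinal → Prop)
    (move : (ι → X) → Set (ι → X))
    (huniq : ∀ q α β, wval q α → wval q β → α = β)
    (hloc : ∀ q k, wval q k → k < Ordinal.omega0 →
      ∃ S : Finset ι, ∀ q' : ι → X, (∀ i ∈ S, q' i = q i) → ∀ β, wval q' β → β ≤ k)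
    (hnotlim : ∀ q α, wval q α → α ≠ Ordinal.omega0)
    (hfin : ∀ q : ι → X, ∀ S : Finset ι, {q' ∈ move q | ∃ i ∈ S, q' i ≠ q i}.Finite)
    (hbval : ∀ q α, bval q α →
      ∃ k : Ordinal, wval q k ∧ k ≤ α ∧
        (∀ q' ∈ move q, ∃ β ≤ α, wval q' β) ∧
        (∀ γ : Ordinal, γ < α → γ < k ∨ ∃ q' ∈ move q, ∃ β ≤ α, wval q' β ∧ γ < β)) :
    ∀ q : ι → X, ¬ bval q Ordinal.omega0 := by
  intro q hq
  obtain ⟨k, hk, hkω, hmoves, hsup⟩ := hbval q _ hq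
  have hk_lt : k < Ordinal.omega0 := hkω.lt_of_ne (hnotlim q k hk)
  obtain ⟨S, hS⟩ := hloc q k hk hk_lt
  set A := {β | ∃ q' ∈ move q, wval q' β}
  have hA_lt : ∀ β ∈ A, β < Ordinal.omega0 := by
    rintro β ⟨q', hq', hβ⟩
    obtain ⟨β', hβ'ω, hβ'⟩ := hmoves q' hq'
    exact huniq q' β β' hβ hβ' ▸ hβ'ω.lt_of_ne (hnotlim q' β' hβ')
  have hA_fin : {β ∈ A | ¬β ≤ k}.Finite := by
    refine ((hfin q S).setOf_exists_mem_of_subsingleton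
      (fun q' _ hα _ hβ => huniq q' _ _ hα hβ)).subset ?_
    rintro β ⟨⟨q', hq', hβ⟩, hβk⟩
    refine ⟨q', ⟨hq', ?_⟩, hβ⟩
    by_contra! hagree
    exact hβk (hS q' hagree β hβ)
  obtain ⟨M, hMω, hkM, hAM⟩ := exists_bound_lt_of_finite_not_le hA_lt hk_lt hA_fin
  rcases hsup M hMω with hMk | ⟨q', hq', β, -, hβ, hMβ⟩
  · exact hMk.not_ge hkM
  · exact hMβ.not_ge (hAM β ⟨q', hq', hβ⟩)
end
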